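/- Let H₁, H₂ be infinite-dimensional complex Hilbert spaces (not necessarily separable) and D₁ ∈ B(H₁), D₂ ∈ B(H₂). If D₁ is upper semi-Fredholm, range(D₂) is closed, and either (α(D₂) < β(D₁) and β(D₁) = ∞) or D₂ is upper semi-Fredholm, then there exists A ∈ B(H₂, H₁) such that T = [[D₁, A],[0, D₂]] is upper semi-Fredholm. -/

import Mathlib

noncomputable section

open Cardinal

/-- The nullity `α(T)`: the dimension of the kernel of `T`. -/
def nullity {E F : Type*} [NormedAddCommGroup E] [NormedSpace ℂ E]
    [NormedAddCommGroup F] [NormedSpace ℂ F] (T : E →L[ℂ] F) : Cardinal :=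
  Module.rank ℂ (LinearMap.ker (T : E →ₗ[ℂ] F))

/-- The deficiency `β(T)`: the codimension of the range of `T`. -/
def deficiency {E F : Type*} [NormedAddCommGroup E] [NormedSpace ℂ E]
    [NormedAddCommGroup F] [NormedSpace ℂ F] (T : E →L[ℂ] F) : Cardinal :=
  Module.rank ℂ (F ⧸ LinearMap.range (T : E →ₗ[ℂ] F))

/-- Upper semi-Fredholm: finite-dimensional kernel and closed range. -/
def UpperSemiFredholm {E F : Type*} [NormedAddCommGroup E] [NormedSpace ℂ E]
    [NormedAddCommGroup F] [NormedSpace ℂ F] (T : E →L[ℂ] F) : Prop :=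
  nullity T < ℵ₀ ∧ IsClosed ((LinearMap.range (T : E →ₗ[ℂ] F) : Submodule ℂ F) : Set F)

/-- Lower semi-Fredholm: range of finite codimension. -/
def LowerSemiFredholm {E F : Type*} [NormedAddCommGroup E] [NormedSpace ℂ E]
    [NormedAddCommGroup F] [NormedSpace ℂ F] (T : E →L[ℂ] F) : Prop :=
  deficiency T < ℵ₀

/-- Fredholm: finite nullity and finite deficiency. -/
def IsFredholmOp {E F : Type*} [NormedAddCommGroup E] [NormedSpace ℂ E]
    [NormedAddCommGroup F] [NormedSpace ℂ F] (T : E →L[ℂ] F) : Prop :=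
  nullity T < ℵ₀ ∧ deficiency T < ℵ₀

/-- The upper triangular block operator matrix `[[D₁, A], [0, D₂]]` on `H₁ ⊕ H₂`. -/
def blockUT {H₁ H₂ : Type*} [NormedAddCommGroup H₁] [NormedSpace ℂ H₁]
    [NormedAddCommGroup H₂] [NormedSpace ℂ H₂]
    (D₁ : H₁ →L[ℂ] H₁) (D₂ : H₂ →L[ℂ] H₂) (A : H₂ →L[ℂ] H₁) :
    (H₁ × H₂) →L[ℂ] (H₁ × H₂) :=
  (D₁.comp (ContinuousLinearMap.fst ℂ H₁ H₂) +
      A.comp (ContinuousLinearMap.snd ℂ H₁ H₂)).prod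
    (D₂.comp (ContinuousLinearMap.snd ℂ H₁ H₂))

universe u

lemma max_norm_le_of_inner_eq_zero {E : Type u} [NormedAddCommGroup E]
    [InnerProductSpace ℂ E] (a b : E) (h : (inner ℂ a b : ℂ) = 0) :
    max ‖a‖ ‖b‖ ≤ ‖a + b‖ := by
  have hsq : ‖a + b‖ * ‖a + b‖ = ‖a‖ * ‖a‖ + ‖b‖ * ‖b‖ :=
    norm_add_sq_eq_norm_sq_add_norm_sq_of_inner_eq_zero _ _ h
  have h0 : (0:ℝ) ≤ ‖a + b‖ := norm_nonneg _
  have h1 : ‖a‖ ≤ ‖a + b‖ := by nlinarith [norm_nonneg a, norm_nonneg b]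
  have h2 : ‖b‖ ≤ ‖a + b‖ := by nlinarith [norm_nonneg a, norm_nonneg b]
  exact max_le h1 h2

/-- orthogonal closed sum is closed -/
lemma isClosed_sup_orth {E : Type u} [NormedAddCommGroup E] [InnerProductSpace ℂ E]
    [CompleteSpace E] {U V : Submodule ℂ E} (hU : IsClosed (U : Set E))
    (hV : IsClosed (V : Set E)) (h : V ≤ Uᗮ) :
    IsClosed ((U ⊔ V : Submodule ℂ E) : Set E) := by
  haveI : CompleteSpace U := hU.completeSpace_coe
  haveI : CompleteSpace V := hV.completeSpace_coe
  have anti : AntilipschitzWith 1 (U.subtypeL.coprod V.subtypeL) := by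
    apply ContinuousLinearMap.antilipschitz_of_bound
    rintro ⟨u, v⟩
    have hin : (inner ℂ (u : E) (v : E) : ℂ) = 0 := (Submodule.mem_orthogonal _ _).mp (h v.2) u u.2
    have key := max_norm_le_of_inner_eq_zero (u : E) (v : E) hin
    have hfx : (U.subtypeL.coprod V.subtypeL) (u, v) = (u : E) + (v : E) := rfl
    rw [hfx, NNReal.coe_one, one_mul, Prod.norm_def]
    exact key
  have hcl := anti.isClosed_range (U.subtypeL.coprod V.subtypeL).uniformContinuous
  have hrange : LinearMap.range ((U.subtypeL.coprod V.subtypeL : U × V →L[ℂ] E) : U × V →ₗ[ℂ] E) = U ⊔ V := by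
    rw [ContinuousLinearMap.range_coprod, Submodule.range_subtypeL, Submodule.range_subtypeL]
  have hs : ((U ⊔ V : Submodule ℂ E) : Set E) = Set.range (U.subtypeL.coprod V.subtypeL) := by
    rw [← hrange]; exact LinearMap.coe_range _
  rwa [hs]

/-- embedding between Hilbert bases gives a linear isometry -/
def isomOfEmb {E F : Type u} [NormedAddCommGroup E] [InnerProductSpace ℂ E] [CompleteSpace E]
    [NormedAddCommGroup F] [InnerProductSpace ℂ F] [CompleteSpace F]
    {ι κ : Type*} (bE : HilbertBasis ι ℂ E) (bF : HilbertBasis κ ℂ F) (f : ι ↪ κ) :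
    E →ₗᵢ[ℂ] F :=
  ((bF.orthonormal.comp f f.injective).orthogonalFamily.linearIsometry).comp
    bE.repr.toLinearIsometry

lemma exists_isometry {E F : Type u} [NormedAddCommGroup E] [InnerProductSpace ℂ E]
    [CompleteSpace E] [NormedAddCommGroup F] [InnerProductSpace ℂ F] [CompleteSpace F]
    (h : Module.rank ℂ E < Module.rank ℂ F) : Nonempty (E →ₗᵢ[ℂ] F) := by
  obtain ⟨s, bE, -⟩ := exists_hilbertBasis ℂ E
  obtain ⟨t, bF, -⟩ := exists_hilbertBasis ℂ F
  rcases le_total (#s) (#t) with hle | hle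
  · obtain ⟨f⟩ := Cardinal.le_def _ _ |>.mp hle
    exact ⟨isomOfEmb bE bF f⟩
  · obtain ⟨f⟩ := Cardinal.le_def _ _ |>.mp hle
    have := LinearMap.rank_le_of_injective (isomOfEmb bF bE f).toLinearMap
      (isomOfEmb bF bE f).injective
    exact absurd this (not_le.mpr h)

lemma blockUT_apply {H₁ H₂ : Type*} [NormedAddCommGroup H₁] [NormedSpace ℂ H₁]
    [NormedAddCommGroup H₂] [NormedSpace ℂ H₂]
    (D₁ : H₁ →L[ℂ] H₁) (D₂ : H₂ →L[ℂ] H₂) (A : H₂ →L[ℂ] H₁) (x : H₁) (y : H₂) :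
    blockUT D₁ D₂ A (x, y) = (D₁ x + A y, D₂ y) := rfl

variable {H₁ H₂ : Type u}
  [NormedAddCommGroup H₁] [InnerProductSpace ℂ H₁] [CompleteSpace H₁]
  [NormedAddCommGroup H₂] [InnerProductSpace ℂ H₂] [CompleteSpace H₂]

theorem stmt_13 (h1 : ¬ FiniteDimensional ℂ H₁) (h2 : ¬ FiniteDimensional ℂ H₂)
    (D₁ : H₁ →L[ℂ] H₁) (D₂ : H₂ →L[ℂ] H₂)
    (ha : UpperSemiFredholm D₁)
    (hb : IsClosed ((LinearMap.range (D₂ : H₂ →ₗ[ℂ] H₂) : Submodule ℂ H₂) : Set H₂))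
    (hc : (nullity D₂ < deficiency D₁ ∧ ℵ₀ ≤ deficiency D₁) ∨ UpperSemiFredholm D₂) :
    ∃ A : H₂ →L[ℂ] H₁, UpperSemiFredholm (blockUT D₁ D₂ A) := by
  rcases hc with ⟨hlt, -⟩ | hd2
  · -- case 1
    set N : Submodule ℂ H₂ := LinearMap.ker (D₂ : H₂ →ₗ[ℂ] H₂) with hN
    set K : Submodule ℂ H₁ := (LinearMap.range (D₁ : H₁ →ₗ[ℂ] H₁))ᗮ with hK
    haveI : CompleteSpace N := (ContinuousLinearMap.isClosed_ker D₂).completeSpace_coe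
    have hKcl : IsClosed (K : Set H₁) := (LinearMap.range (D₁ : H₁ →ₗ[ℂ] H₁)).isClosed_orthogonal
    haveI : CompleteSpace K := hKcl.completeSpace_coe
    haveI : CompleteSpace (LinearMap.range (D₁ : H₁ →ₗ[ℂ] H₁)) := ha.2.completeSpace_coe
    have hcompl : IsCompl (LinearMap.range (D₁ : H₁ →ₗ[ℂ] H₁)) K := Submodule.isCompl_orthogonal_of_hasOrthogonalProjection
    have hrankK : deficiency D₁ = Module.rank ℂ K :=
      (Submodule.quotientEquivOfIsCompl _ _ hcompl).rank_eq
    have hlt' : Module.rank ℂ N < Module.rank ℂ K := by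
      rw [← hrankK]; exact hlt
    obtain ⟨J⟩ := exists_isometry hlt'
    set P := N.orthogonalProjectionOnto with hP
    set A : H₂ →L[ℂ] H₁ := K.subtypeL.comp (J.toContinuousLinearMap.comp P) with hA
    have hAy : ∀ y : H₂, A y = (J (P y) : H₁) := fun y => rfl
    have hAn : ∀ n : N, A (n : H₂) = (J n : H₁) := by
      intro n
      rw [hAy]
      exact congrArg _ (congrArg _ (Submodule.orthogonalProjectionOnto_mem_subspace_eq_self n))
    -- kernel structure
    have hker : ∀ z : H₁ × H₂, blockUT D₁ D₂ A z = 0 → D₁ z.1 = 0 ∧ z.2 = 0 := by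
      rintro ⟨x, y⟩ hz
      rw [blockUT_apply, Prod.mk_eq_zero] at hz
      obtain ⟨hz1, hz2⟩ := hz
      have hAyK : A y ∈ K := (J (P y)).2
      have hDx : D₁ x = -A y := eq_neg_of_add_eq_zero_left hz1
      have hD1K : D₁ x ∈ K := hDx ▸ neg_mem hAyK
      have hx0 : D₁ x = 0 :=
        Submodule.disjoint_def.mp (LinearMap.range (D₁ : H₁ →ₗ[ℂ] H₁)).orthogonal_disjoint _ ⟨x, rfl⟩ hD1K
      have hAy0 : A y = 0 := by rw [hDx] at hx0; simpa using hx0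
      have hJ0 : J (P y) = 0 := by
        apply Subtype.ext
        rw [← hAy y]; simpa using hAy0
      have hPy : P y = 0 := J.injective (by rw [hJ0, map_zero])
      have hyN : y ∈ N := LinearMap.mem_ker.mpr hz2
      have hPyy : ((P y : N) : H₂) = y := N.starProjection_eq_self_iff.mpr hyN
      rw [hPy] at hPyy
      exact ⟨hx0, by simpa using hPyy.symm⟩
    refine ⟨A, ?_, ?_⟩
    · -- nullity
      have hmono : nullity (blockUT D₁ D₂ A) ≤ nullity D₁ := by
        let f : (LinearMap.ker (blockUT D₁ D₂ A : H₁ × H₂ →ₗ[ℂ] H₁ × H₂)) →ₗ[ℂ] (LinearMap.ker (D₁ : H₁ →ₗ[ℂ] H₁)) :=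
          { toFun := fun z => ⟨(z : H₁ × H₂).1,
              LinearMap.mem_ker.mpr (hker _ (LinearMap.mem_ker.mp z.2)).1⟩
            map_add' := fun a b => rfl
            map_smul' := fun c a => rfl }
        refine LinearMap.rank_le_of_injective f ?_
        intro a b hab
        have h1 : (a : H₁ × H₂).1 = (b : H₁ × H₂).1 := congrArg Subtype.val hab
        have ha2 := (hker _ (LinearMap.mem_ker.mp a.2)).2
        have hb2 := (hker _ (LinearMap.mem_ker.mp b.2)).2
        exact Subtype.ext (Prod.ext h1 (ha2.trans hb2.symm))
      exact lt_of_le_of_lt hmono ha.1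
    · -- closed range
      set M : Submodule ℂ H₁ := LinearMap.range (A : H₂ →ₗ[ℂ] H₁) with hM
      have hMK : M ≤ K := by rintro _ ⟨y, rfl⟩; exact (J (P y)).2
      have hMcl : IsClosed (M : Set H₁) := by
        have hJr : IsClosed (Set.range (⇑J) : Set K) :=
          J.isometry.antilipschitz.isClosed_range J.isometry.uniformContinuous
        have him : (M : Set H₁) = Subtype.val '' (Set.range ⇑J) := by
          ext w
          constructor
          · rintro ⟨y, rfl⟩
            exact ⟨J (P y), ⟨P y, rfl⟩, (hAy y).symm⟩
          · rintro ⟨-, ⟨n, rfl⟩, rfl⟩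
            exact ⟨(n : H₂), (hAn n)⟩
        rw [him]
        exact hKcl.isClosedEmbedding_subtypeVal.isClosedMap _ hJr
      have hsup : IsClosed ((LinearMap.range (D₁ : H₁ →ₗ[ℂ] H₁) ⊔ M : Submodule ℂ H₁) : Set H₁) :=
        isClosed_sup_orth ha.2 hMcl hMK
      have hrange : ((LinearMap.range (blockUT D₁ D₂ A : H₁ × H₂ →ₗ[ℂ] H₁ × H₂) : Submodule ℂ (H₁ × H₂)) : Set (H₁ × H₂))
          = ((LinearMap.range (D₁ : H₁ →ₗ[ℂ] H₁) ⊔ M : Submodule ℂ H₁) : Set H₁) ×ˢ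
            ((LinearMap.range (D₂ : H₂ →ₗ[ℂ] H₂) : Submodule ℂ H₂) : Set H₂) := by
        ext w
        simp only [SetLike.mem_coe, LinearMap.mem_range, Set.mem_prod]
        constructor
        · rintro ⟨⟨x, y⟩, rfl⟩
          exact ⟨Submodule.add_mem_sup ⟨x, rfl⟩ ⟨y, rfl⟩, ⟨y, rfl⟩⟩
        · rintro ⟨hu, ⟨w', hw2⟩⟩
          obtain ⟨a, haa, bb, hbb, hw1⟩ := Submodule.mem_sup.mp hu
          obtain ⟨x, rfl⟩ := haa
          obtain ⟨z, rfl⟩ := hbb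
          set yy : H₂ := ((P z : N) : H₂) + (w' - ((P w' : N) : H₂)) with hyy
          have hA1 : A yy = A z := by
            have e1 : A ((P z : N) : H₂) = A z := (hAn (P z)).trans (hAy z).symm
            have e2 : A ((P w' : N) : H₂) = A w' := (hAn (P w')).trans (hAy w').symm
            rw [hyy, map_add, map_sub, e1, e2]; abel
          have hD2e : D₂ yy = D₂ w' := by
            have z0 : D₂ ((P z : N) : H₂) = 0 := LinearMap.mem_ker.mp (P z).2
            have w0 : D₂ ((P w' : N) : H₂) = 0 := LinearMap.mem_ker.mp (P w').2
            rw [hyy, map_add, map_sub, z0, w0]; abel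
          refine ⟨(x, yy), Prod.ext ?_ ?_⟩
          · show D₁ x + A yy = w.1
            rw [hA1]; exact hw1
          · show D₂ yy = w.2
            rw [hD2e]; exact hw2
      rw [hrange]
      exact hsup.prod hb
  · -- case 2
    refine ⟨0, ?_, ?_⟩
    · -- nullity
      have hker2 : ∀ z : H₁ × H₂, blockUT D₁ D₂ 0 z = 0 → D₁ z.1 = 0 ∧ D₂ z.2 = 0 := by
        rintro ⟨x, y⟩ hz
        rw [blockUT_apply, Prod.mk_eq_zero] at hz
        exact ⟨by simpa using hz.1, hz.2⟩
      have hf : nullity (blockUT D₁ D₂ 0) ≤ nullity D₁ + nullity D₂ := by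
        let f : (LinearMap.ker (blockUT D₁ D₂ 0 : H₁ × H₂ →ₗ[ℂ] H₁ × H₂)) →ₗ[ℂ] ((LinearMap.ker (D₁ : H₁ →ₗ[ℂ] H₁)) × (LinearMap.ker (D₂ : H₂ →ₗ[ℂ] H₂))) :=
          { toFun := fun z =>
              (⟨(z : H₁ × H₂).1, LinearMap.mem_ker.mpr (hker2 _ (LinearMap.mem_ker.mp z.2)).1⟩,
               ⟨(z : H₁ × H₂).2, LinearMap.mem_ker.mpr (hker2 _ (LinearMap.mem_ker.mp z.2)).2⟩)
            map_add' := fun a b => rfl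
            map_smul' := fun c a => rfl }
        have hinj : Function.Injective f := by
          intro a b hab
          have e1 : (a : H₁ × H₂).1 = (b : H₁ × H₂).1 :=
            congrArg Subtype.val (congrArg Prod.fst hab)
          have e2 : (a : H₁ × H₂).2 = (b : H₁ × H₂).2 :=
            congrArg Subtype.val (congrArg Prod.snd hab)
          exact Subtype.ext (Prod.ext e1 e2)
        calc nullity (blockUT D₁ D₂ 0)
            ≤ Module.rank ℂ ((LinearMap.ker (D₁ : H₁ →ₗ[ℂ] H₁)) × (LinearMap.ker (D₂ : H₂ →ₗ[ℂ] H₂))) :=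
              LinearMap.rank_le_of_injective f hinj
          _ = nullity D₁ + nullity D₂ := rank_prod'
      exact lt_of_le_of_lt hf (Cardinal.add_lt_aleph0 ha.1 hd2.1)
    · -- range
      have hrange : ((LinearMap.range (blockUT D₁ D₂ 0 : H₁ × H₂ →ₗ[ℂ] H₁ × H₂) : Submodule ℂ (H₁ × H₂)) : Set (H₁ × H₂))
          = ((LinearMap.range (D₁ : H₁ →ₗ[ℂ] H₁) : Submodule ℂ H₁) : Set H₁) ×ˢ
            ((LinearMap.range (D₂ : H₂ →ₗ[ℂ] H₂) : Submodule ℂ H₂) : Set H₂) := by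
        ext w
        simp only [SetLike.mem_coe, LinearMap.mem_range, Set.mem_prod]
        constructor
        · rintro ⟨⟨x, y⟩, rfl⟩
          exact ⟨⟨x, by simp [blockUT_apply]⟩, ⟨y, rfl⟩⟩
        · rintro ⟨⟨x, hx⟩, ⟨y, hy⟩⟩
          refine ⟨(x, y), Prod.ext ?_ ?_⟩
          · show D₁ x + (0 : H₂ →L[ℂ] H₁) y = w.1
            simpa using hx
          · exact hy
      rw [hrange]
      exact ha.2.prod hb
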